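/- arXiv:1407.7046 — 11 statements merged into one kernel-verified Lean document; each statement's English description precedes it below -/
import Mathlib

section
/- The product of attainable quantifiers is attainable: if quantifier φ : (X → R) → R is attained by selection function ε (i.e., φ p = p (ε p) for all p) and ψ : (Y → R) → R is attained by δ, then the product quantifier φ ⊗ ψ is attained by the product selection function ε ⊗ δ. -/
/-- Binary product of quantifiers. -/
def qprod {X Y R : Type*} (φ : (X → R) → R) (ψ : (Y → R) → R) : (X × Y → R) → R :=
  fun p => φ (fun x => ψ (fun y => p (x, y)))

/-- Binary product of selection functions. -/
def sprod {X Y R : Type*} (ε : (X → R) → X) (δ : (Y → R) → Y) : (X × Y → R) → X × Y :=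
  fun p =>
    let b : X → Y := fun x => δ (fun y => p (x, y))
    let a : X := ε (fun x => p (x, b x))
    (a, b a)

theorem stmt1 {X Y R : Type*} (φ : (X → R) → R) (ψ : (Y → R) → R)
    (ε : (X → R) → X) (δ : (Y → R) → Y)
    (hφ : ∀ p, φ p = p (ε p)) (hψ : ∀ p, ψ p = p (δ p)) :
    ∀ p : X × Y → R, qprod φ ψ p = p (sprod ε δ p) := by
  intro p
  simp only [qprod, sprod]
  rw [show (fun x => ψ fun y => p (x, y)) = (fun x => p (x, δ fun y => p (x,y))) from funext fun x => hψ _]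
  exact hφ _
end

section
/- Let eps be a function satisfying the explicitly controlled product equation: eps n q = 0-sequence if l (q (zero sequence)) < n, and eps n q = c :: eps (n+1) (q_c) otherwise, where c = ε n (fun x => q_x (eps (n+1) q_x)) and q_c α = q (c :: α). Then for every α = eps n q and every i, α = (first i elements of α) ++ eps (n+i) (q restricted by prepending those i elements); in particular α(i+j) = (eps (n+i) (q_{α|i}))(j) for all j. -/
/-- Prepend an element to an infinite sequence. -/
def seqCons {X : Type*} (x : X) (α : ℕ → X) : ℕ → X
  | 0 => x
  | n + 1 => α n

/-- Overwrite the initial segment of an infinite sequence with a finite list. -/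
def listApp {X : Type*} (s : List X) (α : ℕ → X) : ℕ → X :=
  fun i => if h : i < s.length then s.get ⟨i, h⟩ else α (i - s.length)

/-- The list of the first `n` values of an infinite sequence. -/
def firstN {X : Type*} (α : ℕ → X) (n : ℕ) : List X := (List.range n).map α

lemma listApp_nil {X : Type*} (α : ℕ → X) : listApp ([] : List X) α = α := by
  funext i; simp [listApp]

lemma listApp_cons {X : Type*} (x : X) (s : List X) (α : ℕ → X) :
    listApp (x :: s) α = seqCons x (listApp s α) := by
  funext i
  cases i with
  | zero => simp [listApp, seqCons]
  | succ k =>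
    simp only [listApp, seqCons, List.length_cons]
    by_cases h : k < s.length
    · rw [dif_pos (by omega), dif_pos h]
      simp
    · rw [dif_neg (by omega), dif_neg h]
      congr 1
      omega

lemma firstN_zero {X : Type*} (α : ℕ → X) : firstN α 0 = [] := rfl

lemma firstN_length {X : Type*} (α : ℕ → X) (n : ℕ) : (firstN α n).length = n := by
  simp [firstN]

lemma firstN_seqCons {X : Type*} (x : X) (α : ℕ → X) (n : ℕ) :
    firstN (seqCons x α) (n + 1) = x :: firstN α n := by
  simp [firstN, List.range_succ_eq_map, List.map_map, Function.comp, seqCons]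

lemma listApp_const {X : Type*} (z : X) (n : ℕ) :
    listApp (firstN (fun _ => z) n) (fun _ => z) = (fun _ => z) := by
  funext i
  simp only [listApp]
  split
  · simp [firstN]
  · rfl

theorem stmt2 {X R : Type*} (z : X) (l : R → ℕ) (ε : ℕ → (X → R) → X)
    (eps : ℕ → ((ℕ → X) → R) → (ℕ → X))
    (heps : ∀ n (q : (ℕ → X) → R),
      eps n q =
        if l (q (fun _ => z)) < n then (fun _ => z)
        else
          let c := ε n (fun x => q (seqCons x (eps (n + 1) (fun α => q (seqCons x α)))))
          seqCons c (eps (n + 1) (fun α => q (seqCons c α)))) :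
    ∀ (n : ℕ) (q : (ℕ → X) → R) (i : ℕ),
      eps n q = listApp (firstN (eps n q) i)
          (eps (n + i) (fun α => q (listApp (firstN (eps n q) i) α))) ∧
      ∀ j, eps n q (i + j) = eps (n + i) (fun α => q (listApp (firstN (eps n q) i) α)) j := by
  have key : ∀ (i : ℕ) (n : ℕ) (q : (ℕ → X) → R),
      eps n q = listApp (firstN (eps n q) i)
          (eps (n + i) (fun α => q (listApp (firstN (eps n q) i) α))) := by
    intro i
    induction i with
    | zero =>
      intro n q
      simp [firstN_zero, listApp_nil]
    | succ i ih =>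
      intro n q
      rw [heps n q]
      split_ifs with h
      · rw [heps (n + (i + 1))]
        rw [if_pos]
        · exact (listApp_const z (i + 1)).symm
        · simp only [listApp_const]
          omega
      · simp only
        set c := ε n (fun x => q (seqCons x (eps (n + 1) (fun α => q (seqCons x α))))) with hc
        rw [firstN_seqCons, listApp_cons]
        simp only [listApp_cons]
        have := ih (n + 1) (fun α => q (seqCons c α))
        rw [show n + (i + 1) = n + 1 + i by omega]
        exact congrArg (seqCons c) this
  intro n q i
  refine ⟨key i n q, fun j => ?_⟩
  conv_lhs => rw [key i n q]
  simp only [listApp, firstN_length]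
  rw [dif_neg (by omega)]
  congr 1
  omega
end

section
/- Spector's system of equations is solvable from the explicitly controlled product: given q : (ℕ → X) → R, ω : (ℕ → X) → ℕ, and selection functions ε n : (X → R) → X for each n, assuming a functional eps for the result type R' = R × ℕ satisfying the explicitly controlled product equation, there exist α : ℕ → X and p : X → R and n : ℕ such that n = ω α, α n = ε n p, and p (α n) = q α. -/
/-- Auxiliary: the functional obtained after `n` steps of unfolding the product. -/
def auxQ {X R : Type*} (q' : (ℕ → X) → R × ℕ)
    (eps : ℕ → ((ℕ → X) → R × ℕ) → (ℕ → X)) : ℕ → ((ℕ → X) → R × ℕ)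
  | 0 => q'
  | n + 1 => fun β => auxQ q' eps n (seqCons (eps n (auxQ q' eps n) 0) β)

theorem stmt5 {X R : Type*} (z : X) (q : (ℕ → X) → R) (ω : (ℕ → X) → ℕ)
    (ε : ℕ → (X → R) → X)
    (eps : ℕ → ((ℕ → X) → R × ℕ) → (ℕ → X))
    (heps : ∀ n (q' : (ℕ → X) → R × ℕ),
      eps n q' =
        if (q' (fun _ => z)).2 < n then (fun _ => z)
        else
          let ε' : ℕ → (X → R × ℕ) → X := fun n p' => ε n (fun x => (p' x).1)
          let c := ε' n (fun x => q' (seqCons x (eps (n + 1) (fun α => q' (seqCons x α)))))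
          seqCons c (eps (n + 1) (fun α => q' (seqCons c α)))) :
    ∃ (α : ℕ → X) (p : X → R) (n : ℕ), n = ω α ∧ α n = ε n p ∧ p (α n) = q α := by
  classical
  set q' : (ℕ → X) → R × ℕ := fun β => (q β, ω β) with hq'def
  set Q : ℕ → ((ℕ → X) → R × ℕ) := auxQ q' eps with hQdef
  have hQ0 : Q 0 = q' := rfl
  -- the head chosen at stage n (when the stop branch is not taken)
  set C : ℕ → X := fun n =>
    ε n (fun x => (Q n (seqCons x (eps (n + 1) (fun β => Q n (seqCons x β))))).1) with hCdef
  have heq : ∀ n, ¬ (Q n (fun _ => z)).2 < n →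
      eps n (Q n) = seqCons (C n) (eps (n + 1) (Q (n + 1))) := by
    intro n h
    have h1 := heps n (Q n)
    rw [if_neg h] at h1
    have h0 : eps n (Q n) 0 = C n := by rw [h1]; rfl
    have h2 : Q (n + 1) = fun β => Q n (seqCons (C n) β) := by
      show (fun β => Q n (seqCons (eps n (Q n) 0) β)) = _
      rw [h0]
    rw [h2]
    exact h1
  have key : ∀ n, (∀ i, i < n → ¬ (Q i (fun _ => z)).2 < i) →
      (∀ k, eps 0 (Q 0) (n + k) = eps n (Q n) k) ∧
      Q n (eps n (Q n)) = q' (eps 0 (Q 0)) := by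
    intro n
    induction n with
    | zero => exact fun _ => ⟨fun k => by rw [Nat.zero_add], rfl⟩
    | succ n ih =>
      intro h
      obtain ⟨hk, hv⟩ := ih (fun i hi => h i (Nat.lt_succ_of_lt hi))
      have hn := h n (Nat.lt_succ_self n)
      have hs := heq n hn
      have h2 : Q (n + 1) = fun β => Q n (seqCons (C n) β) := by
        show (fun β => Q n (seqCons (eps n (Q n) 0) β)) = _
        rw [hs]
        rfl
      constructor
      · intro k
        have h3 := hk (k + 1)
        rw [show n + (k + 1) = (n + 1) + k by omega] at h3
        rw [h3, hs]
        rfl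
      · have h3 := congrFun h2 (eps (n + 1) (Q (n + 1)))
        rw [h3, ← hs, hv]
  set α : ℕ → X := eps 0 (Q 0) with hαdef
  set n : ℕ := ω α with hndef
  by_cases hc : ∀ i, i ≤ n → ¬ (Q i (fun _ => z)).2 < i
  · obtain ⟨hk, hv⟩ := key n (fun i hi => hc i (le_of_lt hi))
    have hn := hc n le_rfl
    have hs := heq n hn
    have h2 : Q (n + 1) = fun β => Q n (seqCons (C n) β) := by
      show (fun β => Q n (seqCons (eps n (Q n) 0) β)) = _
      rw [hs]
      rfl
    have hαn : α n = C n := by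
      have := hk 0
      rw [Nat.add_zero] at this
      rw [hαdef] at this ⊢
      rw [this, hs]
      rfl
    refine ⟨α, fun x => (Q n (seqCons x (eps (n + 1) (fun β => Q n (seqCons x β))))).1,
      n, rfl, ?_, ?_⟩
    · rw [hαn, hCdef]
    · rw [hαn]
      show (Q n (seqCons (C n) (eps (n + 1) fun β => Q n (seqCons (C n) β)))).1 = q α
      rw [← h2, ← hs, hv]
  · push_neg at hc
    obtain ⟨i, hi, hlt⟩ := hc
    exfalso
    have hex : ∃ j, (Q j (fun _ => z)).2 < j := ⟨i, hlt⟩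
    set k := Nat.find hex with hkdef
    have hkp : (Q k (fun _ => z)).2 < k := Nat.find_spec hex
    have hkmin : ∀ j, j < k → ¬ (Q j (fun _ => z)).2 < j := fun j hj => Nat.find_min hex hj
    have hkn : k ≤ n := le_trans (Nat.find_le hlt) hi
    obtain ⟨hk, hv⟩ := key k hkmin
    have hz : eps k (Q k) = fun _ => z := by
      have h1 := heps k (Q k)
      rwa [if_pos hkp] at h1
    rw [hz] at hv
    rw [hv] at hkp
    have hω : (q' α).2 = ω α := rfl
    rw [hω] at hkp
    omega
end

section
/- Let α : ℕ → (List X → X) and for a list s : List X define α^s : ℕ → X by course-of-values recursion α^s(i) = α(i) (s ++ [α^s(0), ..., α^s(i-1)]). Then for any d : List X → X, ((fun i => if i = 0 then d else α (i-1)))^s = (d s) :: α^{s ++ [d s]}, i.e., prepending d to the sequence of functions corresponds to prepending d(s) to the resulting value sequence and extending s by d(s). -/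
/-- Course-of-values construction: `cov α s i = α i (s ++ [cov α s 0, …, cov α s (i-1)])`. -/
def cov {X : Type*} (α : ℕ → (List X → X)) (s : List X) : ℕ → X
  | i => α i (s ++ List.ofFn (fun j : Fin i => cov α s j))
  termination_by i => i
  decreasing_by exact j.isLt

theorem stmt7 {X : Type*} (α : ℕ → (List X → X)) (d : List X → X) (s : List X) :
    cov (fun i => if i = 0 then d else α (i - 1)) s
      = seqCons (d s) (cov α (s ++ [d s])) := by
  funext i
  induction i using Nat.strong_induction_on with
  | _ i ih =>
    rw [cov]
    match i with
    | 0 => simp [seqCons]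
    | n + 1 =>
      have h : (fun j : Fin (n+1) => cov (fun i => if i = 0 then d else α (i - 1)) s j)
          = fun j : Fin (n+1) => seqCons (d s) (cov α (s ++ [d s])) j := by
        funext j; exact ih j j.isLt
      rw [h]
      simp only [seqCons, List.ofFn_succ]
      rw [cov]
      simp [List.append_assoc]
end

section
/- The dependent explicitly controlled product of selection functions EPS is definable from the simple explicitly controlled product eps: given a family of selection functions ε : List X → ((X → R) → X), define for each k a selection function on List X → X by ε̃ k (P) = fun s => ε s (fun y => P (fun t => y)). If eps satisfies the simple product equation for the ε̃ (with types List X → X), then EPS defined by EPS s q = (eps (length s) (q ∘ (·)^s))^s satisfies the dependent product equation: EPS s q = zero sequence if l (q (zero)) < length s, and EPS s q = c :: EPS (s ++ [c]) q_c otherwise, where c = ε s (fun x => q_x (EPS (s++[x]) q_x)). -/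
lemma cov_zero {X : Type*} (α : ℕ → List X → X) (s : List X) : cov α s 0 = α 0 s := by
  rw [cov]; simp

lemma cov_seqCons_succ {X : Type*} (f : List X → X) (β : ℕ → List X → X) (s : List X) :
    ∀ i, cov (seqCons f β) s (i + 1) = cov β (s ++ [f s]) i := by
  intro i
  induction i using Nat.strong_induction_on with
  | _ i ih =>
    rw [cov, cov]
    show β i _ = β i _
    congr 1
    rw [List.ofFn_succ]
    simp only [Fin.val_zero, Fin.val_succ]
    rw [cov_zero]
    show s ++ f s :: List.ofFn (fun j : Fin i => cov (seqCons f β) s (j + 1)) = _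
    have h1 : (fun j : Fin i => cov (seqCons f β) s (j + 1))
        = fun j : Fin i => cov β (s ++ [f s]) j := by
      funext j
      exact ih j j.isLt
    rw [h1, List.append_cons]

lemma cov_seqCons {X : Type*} (f : List X → X) (β : ℕ → List X → X) (s : List X) :
    cov (seqCons f β) s = seqCons (f s) (cov β (s ++ [f s])) := by
  funext i
  cases i with
  | zero => rw [cov_zero]; rfl
  | succ i => exact cov_seqCons_succ f β s i

lemma cov_const {X : Type*} (z : X) (s : List X) : cov (fun _ _ => z) s = fun _ => z := by
  funext i; rw [cov]

theorem stmt8 {X R : Type*} (z : X) (l : R → ℕ)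
    (ε : List X → (X → R) → X)
    (eps : ℕ → ((ℕ → (List X → X)) → R) → (ℕ → (List X → X)))
    (heps : ∀ n (Q : (ℕ → (List X → X)) → R),
      eps n Q =
        if l (Q (fun _ _ => z)) < n then (fun _ _ => z)
        else
          let εt : ℕ → ((List X → X) → R) → (List X → X) :=
            fun _k P => fun s => ε s (fun y => P (fun _t => y))
          let d := εt n (fun f => Q (seqCons f (eps (n + 1) (fun β => Q (seqCons f β)))))
          seqCons d (eps (n + 1) (fun β => Q (seqCons d β))))
    (EPS : List X → ((ℕ → X) → R) → (ℕ → X))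
    (hEPS : ∀ (s : List X) (q : (ℕ → X) → R),
      EPS s q = cov (eps s.length (fun α => q (cov α s))) s) :
    ∀ (s : List X) (q : (ℕ → X) → R),
      EPS s q =
        if l (q (fun _ => z)) < s.length then (fun _ => z)
        else
          let c := ε s (fun x => q (seqCons x (EPS (s ++ [x]) (fun α => q (seqCons x α)))))
          seqCons c (EPS (s ++ [c]) (fun α => q (seqCons c α))) := by
  intro s q
  rw [hEPS, heps]
  simp only [cov_const]
  split_ifs with h
  · exact cov_const z s
  · rw [cov_seqCons]
    -- d s = c and tails agree
    have hlen : (s ++ [ε s fun x => q (seqCons x (EPS (s ++ [x]) fun α => q (seqCons x α)))]).length = s.length + 1 := by simp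
    have key : ∀ (x : X) (β : ℕ → List X → X),
        q (cov (seqCons (fun _ => x) β) s) = q (seqCons x (cov β (s ++ [x]))) := by
      intro x β; rw [cov_seqCons]
    have hc : (fun y => q (cov (seqCons (fun _ => y) (eps (s.length + 1)
          (fun β => q (cov (seqCons (fun _ => y) β) s)))) s))
        = fun x => q (seqCons x (EPS (s ++ [x]) fun α => q (seqCons x α))) := by
      funext y
      rw [key, hEPS]
      simp only [List.length_append, List.length_singleton]
      have hQ : (fun β => q (cov (seqCons (fun _ => y) β) s))
          = fun α => q (seqCons y (cov α (s ++ [y]))) := funext fun β => key y β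
      rw [hQ]
    set d := (fun s2 => ε s2 (fun y => q (cov (seqCons (fun _ => y) (eps (s.length + 1) (fun β => q (cov (seqCons (fun _ => y) β) s)))) s))) with hd
    rw [hc]
    set c := ε s fun x => q (seqCons x (EPS (s ++ [x]) fun α => q (seqCons x α))) with hcdef
    have hds : d s = c := by rw [hd]; rw [hc]
    have hQd : (fun β => q (cov (seqCons d β) s))
        = fun α => q (seqCons c (cov α (s ++ [c]))) := by
      funext β
      rw [cov_seqCons, hds]
    rw [hQd, hEPS]
    simp only [List.length_append, List.length_singleton]
end

section
/- Spector's bar recursion SBR is definable from the dependent explicitly controlled product EPS: given ω : (ℕ → X) → ℕ and selection functions ε_s : (X → (ℕ → X)) → X for lists s, taking R = (ℕ → X) × ℕ, l = second projection, q^ω α = (α, ω α), and ε̃_s p = ε_s (fun x => (p x).1), if EPS satisfies the dependent product equation then SBR defined by SBR s = s ++ EPS s ((q^ω)_s) satisfies Spector's equation: SBR s = s overwritten on the zero sequence if ω (s overwritten on zero) < length s, and SBR s = SBR (s ++ [c]) otherwise, where c = ε_s (fun x => SBR (s ++ [x])). -/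
/-!
Overwriting with `s ++ [x]` is overwriting with `s` after prepending `x`, so
`(q^ω)_(s ++ [x]) = ((q^ω)_s)_x`. Hence `s ++ EPS (s ++ [x]) ((q^ω)_s)_x` is `SBR (s ++ [x])`,
and one unfolding of the product equation at `s` is exactly one step of Spector's equation,
its stopping test `l ((q^ω)_s 0) < length s` being `ω (s overwritten on 0) < length s`.
-/

section

variable {X : Type*}

theorem listApp_append_singleton (s : List X) (x : X) (α : ℕ → X) :
    listApp (s ++ [x]) α = listApp s (seqCons x α) := by
  funext i
  simp only [listApp, List.length_append, List.length_singleton, List.get_eq_getElem]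
  rcases lt_trichotomy i s.length with hi | rfl | hi
  · rw [dif_pos (by omega), dif_pos hi, List.getElem_append_left hi]
  · simp [seqCons]
  · obtain ⟨k, rfl⟩ : ∃ k, i = s.length + 1 + k := ⟨i - (s.length + 1), by omega⟩
    rw [dif_neg (by omega), dif_neg (by omega),
      show s.length + 1 + k - s.length = k + 1 by omega, Nat.add_sub_cancel_left, seqCons]

/-- The paper's `(q^ω)_s`. -/
def sbrQuery (ω : (ℕ → X) → ℕ) (s : List X) (α : ℕ → X) : (ℕ → X) × ℕ :=
  (listApp s α, ω (listApp s α))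

theorem sbrQuery_append_singleton (ω : (ℕ → X) → ℕ) (s : List X) (x : X) :
    sbrQuery ω (s ++ [x]) = fun α => sbrQuery ω s (seqCons x α) := by
  funext α
  simp only [sbrQuery, listApp_append_singleton]

end

theorem stmt9 {X : Type*} (z : X) (ω : (ℕ → X) → ℕ)
    (ε : List X → (X → (ℕ → X)) → X)
    (EPS : List X → ((ℕ → X) → (ℕ → X) × ℕ) → (ℕ → X))
    (hEPS : ∀ (s : List X) (q : (ℕ → X) → (ℕ → X) × ℕ),
      EPS s q =
        if (q (fun _ => z)).2 < s.length then (fun _ => z)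
        else
          let εt : List X → (X → (ℕ → X) × ℕ) → X := fun s p => ε s (fun x => (p x).1)
          let c := εt s (fun x => q (seqCons x (EPS (s ++ [x]) (fun α => q (seqCons x α)))))
          seqCons c (EPS (s ++ [c]) (fun α => q (seqCons c α))))
    (SBR : List X → (ℕ → X))
    (hSBR : ∀ s : List X,
      SBR s = listApp s (EPS s (fun α => (listApp s α, ω (listApp s α))))) :
    ∀ s : List X,
      SBR s =
        if ω (listApp s (fun _ => z)) < s.length then listApp s (fun _ => z)
        else SBR (s ++ [ε s (fun x => SBR (s ++ [x]))]) := by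
  intro s
  have hSBR' : ∀ t, SBR t = listApp t (EPS t (sbrQuery ω t)) := hSBR
  have hSBR_snoc : ∀ x, SBR (s ++ [x]) =
      (sbrQuery ω s (seqCons x (EPS (s ++ [x]) fun α => sbrQuery ω s (seqCons x α)))).1 := by
    intro x
    rw [hSBR', sbrQuery_append_singleton, listApp_append_singleton]
    rfl
  rw [hSBR' s, hEPS, show (sbrQuery ω s fun _ => z).2 = ω (listApp s fun _ => z) from rfl]
  split_ifs
  · rfl
  · simp only [← hSBR_snoc]
    exact (hSBR_snoc _).symm
end

section
/- Spector's search functional can be totalised in a primitive recursive (System T / computable) way: there is a function χ such that for all ω : (ℕ → X) → ℕ and α : ℕ → X, if there exists n with ω (α overwritten with zeros after position n) < n, then taking m = χ ω α we have ω (first m values of α followed by zeros) < m, and for all i < m, ω (first i values of α followed by zeros) ≥ i. Moreover χ can be defined by a bounded search: letting α^ω(i) = 0 if there is k ≤ i+1 with ω (first k values of α then zeros) < k and α^ω(i) = α(i) otherwise, the bound ω(α^ω) + 1 suffices: the least n ≤ ω(α^ω)+1 with ω(first n values then zeros) < n is the least such n overall. -/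
/-- The first `n` values of `α` followed by `z`'s. -/
def pad {X : Type*} (z : X) (α : ℕ → X) (n : ℕ) : ℕ → X :=
  fun i => if i < n then α i else z

open Classical in
/-- The modified sequence `α^ω` used to bound Spector's search. -/
noncomputable def modSeq {X : Type*} (z : X) (ω : (ℕ → X) → ℕ) (α : ℕ → X) : ℕ → X :=
  fun i => if ∃ k ≤ i + 1, ω (pad z α k) < k then z else α i

open Classical in
theorem stmt11 {X : Type*} (z : X) :
    ∃ χ : ((ℕ → X) → ℕ) → (ℕ → X) → ℕ,
      ∀ (ω : (ℕ → X) → ℕ) (α : ℕ → X),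
        (∃ n, ω (pad z α n) < n) →
          ω (pad z α (χ ω α)) < χ ω α ∧
          (∀ i < χ ω α, i ≤ ω (pad z α i)) ∧
          χ ω α ≤ ω (modSeq z ω α) + 1 := by
  refine ⟨fun ω α => if h : ∃ n, ω (pad z α n) < n then Nat.find h else 0, ?_⟩
  intro ω α h
  simp only [dif_pos h]
  set n₀ := Nat.find h with hn₀
  have hspec : ω (pad z α n₀) < n₀ := Nat.find_spec h
  have hmin : ∀ i < n₀, ¬ ω (pad z α i) < i := fun i hi => Nat.find_min h hi
  refine ⟨hspec, fun i hi => le_of_not_gt (hmin i hi), ?_⟩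
  have hms : modSeq z ω α = pad z α (n₀ - 1) := by
    funext i
    unfold modSeq pad
    by_cases hi : i < n₀ - 1
    · rw [if_pos hi, if_neg]
      rintro ⟨k, hk, hωk⟩
      exact hmin k (lt_of_le_of_lt hk (by omega)) hωk
    · rw [if_neg hi, if_pos ⟨n₀, by omega, hspec⟩]
  have : n₀ - 1 ≤ ω (pad z α (n₀ - 1)) := by
    rcases Nat.eq_zero_or_pos n₀ with h0 | h0
    · omega
    · exact le_of_not_gt (hmin (n₀ - 1) (by omega))
  rw [hms]; omega
end

section
/- If the least n with A_n(ω, α) holds (where A_n(ω,α) means ω applied to the truncation of α at n, padded with zeros, is < n) exists and equals n₀ > 0, then the modified sequence α^ω (defined by α^ω(i) = 0 if ∃ k ≤ i+1 with A_k(ω,α), else α(i)) equals the truncation of α at n₀ - 1 padded with zeros, and consequently n₀ ≤ ω(α^ω) + 1. -/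
theorem stmt12 {X : Type*} (z : X) (ω : (ℕ → X) → ℕ) (α : ℕ → X) (n₀ : ℕ)
    (hpos : 0 < n₀)
    (hA : ω (pad z α n₀) < n₀)
    (hleast : ∀ i < n₀, ¬ ω (pad z α i) < i) :
    modSeq z ω α = pad z α (n₀ - 1) ∧ n₀ ≤ ω (modSeq z ω α) + 1 := by
  have heq : modSeq z ω α = pad z α (n₀ - 1) := by
    funext i
    unfold modSeq pad
    by_cases h : i < n₀ - 1
    · rw [if_pos h, if_neg]
      rintro ⟨k, hk, hAk⟩
      exact hleast k (lt_of_le_of_lt hk (by omega)) hAk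
    · rw [if_neg h, if_pos ⟨n₀, by omega, hA⟩]
  refine ⟨heq, ?_⟩
  rw [heq]
  have := hleast (n₀ - 1) (by omega)
  omega
end

section
/- Let MBR satisfy the modified bar recursion equation MBR s q = ε_s (fun x => q_x (MBR (s++[x]) q_x)) where ε_s : (X → R) → (ℕ → X) are skewed selection functions and q_x α = q (x :: α). Then MBR' defined by MBR' s q = s ++ MBR s q_s satisfies the alternative equation MBR' s q = s ++ ε_s (fun x => q (MBR' (s++[x]) q)), where q_s α = q (s ++ α) for lists s. -/
theorem listApp_seqCons {X : Type*} (s : List X) (x : X) (α : ℕ → X) :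
    listApp s (seqCons x α) = listApp (s ++ [x]) α := by
  funext i
  simp only [listApp, List.get_eq_getElem, List.length_append, List.length_singleton]
  rcases lt_trichotomy i s.length with hi | rfl | hi
  · simp [hi, Nat.lt_succ_of_lt hi, List.getElem_append_left hi]
  · simp [seqCons]
  · obtain ⟨k, rfl⟩ := Nat.exists_eq_add_of_lt hi
    simp [Nat.not_lt_of_gt hi, show s.length + k + 1 - s.length = k + 1 by omega, seqCons]

theorem stmt13 {X R : Type*} (ε : List X → (X → R) → (ℕ → X))
    (MBR : List X → ((ℕ → X) → R) → (ℕ → X))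
    (hMBR : ∀ (s : List X) (q : (ℕ → X) → R),
      MBR s q = ε s (fun x => q (seqCons x (MBR (s ++ [x]) (fun α => q (seqCons x α))))))
    (MBR' : List X → ((ℕ → X) → R) → (ℕ → X))
    (hMBR' : ∀ (s : List X) (q : (ℕ → X) → R),
      MBR' s q = listApp s (MBR s (fun α => q (listApp s α)))) :
    ∀ (s : List X) (q : (ℕ → X) → R),
      MBR' s q = listApp s (ε s (fun x => q (MBR' (s ++ [x]) q))) := by
  intro s q
  rw [hMBR' s q, hMBR s]
  simp only [listApp_seqCons, hMBR']
end

section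
/- Hat-shift lemma for the encoding of MBR into mbr: with Y_j = Bool × (List X → (ℕ → X)), the coding (·)^[s] : (ℕ → Y) → (ℕ → X) defined by α^[s](i) = g(s ++ first n values of α^[s]) (i - n) if n ≤ i is greatest with α(n) = (true, g), and 0 if α(k) = (false, _) for all k ≤ i, and q^[s](α) = q(α^[s]), and x̂ = (true, fun _ => x :: zero-sequence), satisfies (q^[s])_{x̂} = (q_x)^[s ++ [x]], i.e., (hat x :: α)^[s] = x :: α^[s++[x]] pointwise, hence applying q. -/
/-- The tagged value `x̂`. -/
def hatv {X : Type*} (z : X) (x : X) : Bool × (List X → ℕ → X) :=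
  (true, fun _ => seqCons x (fun _ => z))

/-- The decoding `α^[s]` of a sequence of tagged skewed values. -/
def decode {X : Type*} (z : X) (α : ℕ → Bool × (List X → ℕ → X)) (s : List X) : ℕ → X
  | i =>
    let n := Nat.findGreatest (fun n => (α n).1 = true) i
    if (α n).1 = true then
      (α n).2 (s ++ List.ofFn (fun j : Fin n => decode z α s j)) (i - n)
    else z
  termination_by i => i
  decreasing_by exact lt_of_lt_of_le j.isLt (Nat.findGreatest_le i)

/-!
Prepending `x̂` shifts every tag of `β` one place to the right and puts a tag at position `0`.
Hence the greatest tag `≤ i + 1` of `x̂ :: β` is either `n + 1`, where `n` is the greatest tag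
`≤ i` of `β`, or `0` when `β` has no tag up to `i`. In the first case the history handed to the
tagged function is `s ++ x :: (first n values)`, which by strong induction on `i` equals
`(s ++ [x]) ++ (first n values of β^[s ++ [x]])`; in the second case `x̂` yields `x` followed
by `z`s, matching the default value `z`.
-/

theorem Nat.findGreatest_succ_eq_ite_shift (P : ℕ → Prop) [DecidablePred P] (i : ℕ) :
    Nat.findGreatest P (i + 1) =
      if P (Nat.findGreatest (fun n => P (n + 1)) i + 1) then
        Nat.findGreatest (fun n => P (n + 1)) i + 1
      else 0 := by
  induction i with
  | zero => simp [Nat.findGreatest_succ]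
  | succ i ih =>
    rw [Nat.findGreatest_succ, Nat.findGreatest_succ (P := fun n => P (n + 1)), ih]
    by_cases h : P (i + 1 + 1) <;> simp [h]

theorem ofFn_seqCons {X : Type*} (x : X) (α : ℕ → X) (n : ℕ) :
    List.ofFn (fun j : Fin (n + 1) => seqCons x α j) = x :: List.ofFn (fun j : Fin n => α j) :=
  List.ofFn_succ

theorem decode_apply_of_findGreatest_eq {X : Type*} (z : X) (α : ℕ → Bool × (List X → ℕ → X))
    (s : List X) {i n : ℕ} (hn : Nat.findGreatest (fun n => (α n).1 = true) i = n) :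
    decode z α s i =
      if (α n).1 = true then (α n).2 (s ++ List.ofFn (fun j : Fin n => decode z α s j)) (i - n)
      else z := by
  subst hn
  rw [decode]

theorem decode_seqCons_hatv_apply {X : Type*} (z : X) (s : List X) (x : X)
    (β : ℕ → Bool × (List X → ℕ → X)) (i : ℕ) :
    decode z (seqCons (hatv z x) β) s i = seqCons x (decode z β (s ++ [x])) i := by
  induction i using Nat.strong_induction_on with
  | _ i ih =>
  cases i with
  | zero => rw [decode]; rfl
  | succ i =>
    set m := Nat.findGreatest (fun n => (β n).1 = true) i with hm_def
    have hmi : m ≤ i := Nat.findGreatest_le i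
    have hshift : Nat.findGreatest (fun n => (seqCons (hatv z x) β n).1 = true) (i + 1) =
        if (β m).1 = true then m + 1 else 0 :=
      Nat.findGreatest_succ_eq_ite_shift _ i
    show _ = decode z β (s ++ [x]) i
    rw [decode_apply_of_findGreatest_eq z β _ hm_def.symm]
    by_cases hm : (β m).1 = true
    · rw [if_pos hm] at hshift
      have hprefix : List.ofFn (fun j : Fin (m + 1) => decode z (seqCons (hatv z x) β) s j) =
          x :: List.ofFn (fun j : Fin m => decode z β (s ++ [x]) j) := by
        rw [← ofFn_seqCons]
        congr 1
        funext j
        exact ih j (by omega)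
      rw [decode_apply_of_findGreatest_eq z _ s hshift, seqCons.eq_2, if_pos hm, if_pos hm,
        hprefix, List.append_cons s x, Nat.add_sub_add_right]
    · rw [if_neg hm] at hshift
      rw [decode_apply_of_findGreatest_eq z _ s hshift, if_neg hm]
      rfl

theorem stmt15 {X R : Type*} (z : X) (s : List X) (x : X) :
    (∀ β : ℕ → Bool × (List X → ℕ → X),
        decode z (seqCons (hatv z x) β) s = seqCons x (decode z β (s ++ [x]))) ∧
    (∀ (q : (ℕ → X) → R) (β : ℕ → Bool × (List X → ℕ → X)),
        q (decode z (seqCons (hatv z x) β) s) = q (seqCons x (decode z β (s ++ [x])))) := by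
  have hshift : ∀ β : ℕ → Bool × (List X → ℕ → X),
      decode z (seqCons (hatv z x) β) s = seqCons x (decode z β (s ++ [x])) :=
    fun β => funext (decode_seqCons_hatv_apply z s x β)
  exact ⟨hshift, fun q β => congrArg q (hshift β)⟩
end

section
/- The dependent implicitly controlled product IPS is definable from the simple one ips: with ε̃ k (P) = fun s => ε s (fun y => P (fun t => y)) for a family ε : List X → ((X → R) → X), if ips : ℕ → (((ℕ → (List X → X)) → R)) → (ℕ → (List X → X)) satisfies ips n Q = d :: ips (n+1) Q_d with d = ε̃ n (fun f => Q_f (ips (n+1) Q_f)), then IPS defined by IPS s q = (ips (length s) (q ∘ (·)^s))^s satisfies IPS s q = c :: IPS (s ++ [c]) q_c where c = ε s (fun x => q_x (IPS (s++[x]) q_x)). -/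
lemma cov_cons {X : Type*} (d : List X → X) (α : ℕ → (List X → X)) (s : List X) :
    cov (seqCons d α) s = seqCons (d s) (cov α (s ++ [d s])) := by
  funext i
  induction i using Nat.strong_induction_on with
  | _ i ih =>
    match i with
    | 0 => rw [cov]; simp [seqCons]
    | i + 1 =>
      rw [cov]
      show α i _ = _
      conv_rhs => rw [show seqCons (d s) (cov α (s ++ [d s])) (i+1) = cov α (s ++ [d s]) i from rfl, cov]
      congr 1
      have h0 : cov (seqCons d α) s 0 = d s := by rw [cov]; simp [seqCons]
      have hofn : (List.ofFn fun j : Fin (i+1) => cov (seqCons d α) s j)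
          = d s :: List.ofFn (fun j : Fin i => cov α (s ++ [d s]) j) := by
        rw [List.ofFn_succ]
        rw [show cov (seqCons d α) s ↑(0 : Fin (i+1)) = d s from h0]
        exact congrArg (List.cons (d s)) (congrArg List.ofFn (funext fun j : Fin i => ih (j.1 + 1) (Nat.succ_lt_succ j.isLt)))
      rw [hofn, List.append_cons]

theorem stmt17 {X R : Type*} (ε : List X → (X → R) → X)
    (ips : ℕ → ((ℕ → (List X → X)) → R) → (ℕ → (List X → X)))
    (hips : ∀ n (Q : (ℕ → (List X → X)) → R),
      ips n Q =
        let εt : ℕ → ((List X → X) → R) → (List X → X) :=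
          fun _k P => fun s => ε s (fun y => P (fun _t => y))
        let d := εt n (fun f => Q (seqCons f (ips (n + 1) (fun β => Q (seqCons f β)))))
        seqCons d (ips (n + 1) (fun β => Q (seqCons d β))))
    (IPS : List X → ((ℕ → X) → R) → (ℕ → X))
    (hIPS : ∀ (s : List X) (q : (ℕ → X) → R),
      IPS s q = cov (ips s.length (fun α => q (cov α s))) s) :
    ∀ (s : List X) (q : (ℕ → X) → R),
      IPS s q =
        let c := ε s (fun x => q (seqCons x (IPS (s ++ [x]) (fun α => q (seqCons x α)))))
        seqCons c (IPS (s ++ [c]) (fun α => q (seqCons c α))) := by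
  intro s q
  dsimp only
  set n := s.length with hn
  set Q : (ℕ → (List X → X)) → R := fun α => q (cov α s) with hQ
  have hA : ∀ (x : X) (β : ℕ → List X → X),
      Q (seqCons (fun _ => x) β) = q (seqCons x (cov β (s ++ [x]))) := by
    intro x β
    show q (cov (seqCons (fun _ => x) β) s) = _
    rw [cov_cons]
  have hB : ∀ x : X, IPS (s ++ [x]) (fun α => q (seqCons x α))
      = cov (ips (n+1) (fun β => Q (seqCons (fun _ => x) β))) (s ++ [x]) := by
    intro x
    rw [hIPS]
    have hl : (s ++ [x]).length = n + 1 := by simp [hn]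
    have hfun : (fun α => q (seqCons x (cov α (s ++ [x]))))
        = fun β => Q (seqCons (fun _ => x) β) := funext fun β => (hA x β).symm
    rw [hl, hfun]
  set d : List X → X := fun s' => ε s'
      (fun y => Q (seqCons (fun _t => y) (ips (n+1) (fun β => Q (seqCons (fun _t => y) β)))))
    with hd
  have hc : ε s (fun x => q (seqCons x (IPS (s ++ [x]) (fun α => q (seqCons x α))))) = d s := by
    rw [hd]
    congr 1
    funext x
    rw [hB x, ← hA]
  rw [hc]
  have hips' : ips n Q = seqCons d (ips (n+1) (fun β => Q (seqCons d β))) := hips n Q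
  have lhs : IPS s q = seqCons (d s) (cov (ips (n+1) (fun β => Q (seqCons d β))) (s ++ [d s])) := by
    rw [hIPS, ← hn, ← hQ, hips', cov_cons]
  rw [lhs]
  rw [hB (d s)]
  have heq : (fun β : ℕ → List X → X => Q (seqCons d β))
      = (fun β : ℕ → List X → X => Q (seqCons (fun _ => d s) β)) := by
    funext β
    show q (cov (seqCons d β) s) = q (cov (seqCons (fun _ => d s) β) s)
    rw [cov_cons, cov_cons]
  rw [heq]
end
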